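/- Product estimate, anisotropic version (Lemma 5.3, bounds (prod1) and (prod3)): Let s > (d+1)/2. There is a constant C, depending on d, s and k, such that for every f ∈ H^{s−1,1/2}(𝕋^d) and every u ∈ H^{0,1/2}(𝕋^d), the product fu lies in H^{0,1/2}(𝕋^d) and ‖fu‖_{H^{0,1/2}} ≤ C ‖f‖_{H^{s−1,1/2}} ‖u‖_{H^{0,1/2}}. In particular ‖fu‖_{H^{0,1/2}} ≤ C' ‖f‖_{H^{s−1/2}} ‖u‖_{H^{0,1/2}} for all f ∈ H^{s−1/2}(𝕋^d). -/

import Mathlib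

noncomputable section
open scoped BigOperators
open Filter

/-- The frequency lattice `ℤ^d` of the torus `𝕋^d`. -/
abbrev Freq (d : ℕ) := Fin d → ℤ

/-- A function on `𝕋^d`, represented by its sequence of Fourier coefficients. -/
abbrev Coeffs (d : ℕ) := Freq d → ℂ

variable {d : ℕ}

/-- The pairing `⟨j, k⟩` between a lattice frequency and the frequency vector `k ∈ ℝ^d`. -/
def dotk (k : Fin d → ℝ) (j : Freq d) : ℝ := ∑ i, (j i : ℝ) * k i

/-- The Japanese bracket `⟨j⟩ = (1+|j|²)^{1/2}`. -/
def jb (j : Freq d) : ℝ := Real.sqrt (1 + ∑ i, ((j i : ℝ)) ^ 2)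

/-- The entries of `k` are linearly independent over `ℚ` (equivalently, over `ℤ`). -/
def Indep (k : Fin d → ℝ) : Prop := ∀ j : Freq d, dotk k j = 0 → j = 0

/-- The weight defining the anisotropic Sobolev norm `H^{s,θ}`. -/
def wt (k : Fin d → ℝ) (s θ : ℝ) (j : Freq d) : ℝ :=
  jb j ^ (2 * s) * (1 + (dotk k j) ^ 2) ^ θ

/-- Membership in the anisotropic Sobolev space `H^{s,θ}(𝕋^d)`. -/
def MemSob (k : Fin d → ℝ) (s θ : ℝ) (u : Coeffs d) : Prop :=
  Summable (fun j : Freq d => wt k s θ j * ‖u j‖ ^ 2)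

/-- The `H^{s,θ}(𝕋^d)` norm. -/
def sobNorm (k : Fin d → ℝ) (s θ : ℝ) (u : Coeffs d) : ℝ :=
  Real.sqrt (∑' j : Freq d, wt k s θ j * ‖u j‖ ^ 2)

/-- Membership in the Sobolev space `H^s(𝕋^d)`; `H^0 = L²`. -/
def MemHs (s : ℝ) (u : Coeffs d) : Prop :=
  Summable (fun j : Freq d => jb j ^ (2 * s) * ‖u j‖ ^ 2)

/-- The `H^s(𝕋^d)` norm; for `s = 0` this is the `L²(𝕋^d)` norm (spectrally normalized). -/
def HsNorm (s : ℝ) (u : Coeffs d) : ℝ :=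
  Real.sqrt (∑' j : Freq d, jb j ^ (2 * s) * ‖u j‖ ^ 2)

/-- The value of the function with Fourier coefficients `u` at the point `α ∈ 𝕋^d = ℝ^d/(2πℤ)^d`,
namely `Σ_j û_j e^{i⟨j,α⟩}`. -/
def value (u : Coeffs d) (α : Fin d → ℝ) : ℂ :=
  ∑' j : Freq d, u j * Complex.exp (Complex.I * ((∑ i, (j i : ℝ) * α i : ℝ) : ℂ))

/-- The squared norm of the space `ℋ^σ = H^σ × H^{σ,1/2}`. -/
def HHnormSq (k : Fin d → ℝ) (σ : ℝ) (W R : Coeffs d) : ℝ :=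
  HsNorm σ W ^ 2 + sobNorm k σ (1/2) R ^ 2

/-- The norm of the space `ℋ^σ = H^σ × H^{σ,1/2}`. -/
def HHnorm (k : Fin d → ℝ) (σ : ℝ) (W R : Coeffs d) : ℝ :=
  Real.sqrt (HHnormSq k σ W R)

/-- Membership in `ℋ^σ = H^σ × H^{σ,1/2}`. -/
def MemHH (k : Fin d → ℝ) (σ : ℝ) (W R : Coeffs d) : Prop :=
  MemHs σ W ∧ MemSob k σ (1/2) R

/-- The directional derivative `∂_α = k₁∂₁+⋯+k_d∂_d`, acting on Fourier coefficients
by multiplication by `i⟨j,k⟩`. -/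
def dAl (k : Fin d → ℝ) (u : Coeffs d) : Coeffs d :=
  fun j => Complex.I * (dotk k j : ℝ) * u j

/-- The projection `P`: the Fourier multiplier which is `1` for `⟨j,k⟩ < 0`, `1/2`
at the zero mode, `0` for `⟨j,k⟩ > 0`. -/
def Pp (k : Fin d → ℝ) (u : Coeffs d) : Coeffs d := fun j =>
  if dotk k j < 0 then u j else if dotk k j = 0 then u j / 2 else 0

/-- The complementary projection `P̄ = I - P`. -/
def Pb (k : Fin d → ℝ) (u : Coeffs d) : Coeffs d := u - Pp k u

/-- The Fourier coefficients of the complex conjugate function. -/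
def conjC (u : Coeffs d) : Coeffs d := fun j => (starRingEnd ℂ) (u (-j))

/-- The Fourier coefficients of the product of two functions (convolution). -/
def cmul (u v : Coeffs d) : Coeffs d := fun j => ∑' m : Freq d, u m * v (j - m)

/-- The Fourier coefficients of the constant function `1`. -/
def oneC : Coeffs d := fun j => if j = 0 then 1 else 0

/-- `u` is holomorphic: its Fourier coefficients vanish for `⟨j,k⟩ > 0`. -/
def Holo (k : Fin d → ℝ) (u : Coeffs d) : Prop := ∀ j : Freq d, 0 < dotk k j → u j = 0

/-- The coefficients of `2 Re u`. -/
def twoRe (u : Coeffs d) : Coeffs d := u + conjC u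

/-- The coefficients of `2 Im u`. -/
def twoIm (u : Coeffs d) : Coeffs d := fun j => (u j - conjC u j) / Complex.I

/-- The coefficients of `u²`. -/
def csq (u : Coeffs d) : Coeffs d := cmul u u

/-- The coefficients of `|u|² = u·conj(u)`. -/
def absSqC (u : Coeffs d) : Coeffs d := cmul u (conjC u)

/-- The advection velocity `b := 2 Re P[R(1-conj Y)]`. -/
def bC (k : Fin d → ℝ) (R Y : Coeffs d) : Coeffs d :=
  twoRe (Pp k (cmul R (oneC - conjC Y)))

/-- The frequency shift `a := i(P̄[conj(R)·R_α] - P[R·conj(R)_α])`. -/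
def aCf (k : Fin d → ℝ) (R : Coeffs d) : Coeffs d := fun j =>
  Complex.I * ((Pb k (cmul (conjC R) (dAl k R)) - Pp k (cmul R (dAl k (conjC R)))) j)

/-- The auxiliary function
`M := P̄[conj(R)·Y_α − R_α·conj(Y)] + P[R·conj(Y)_α − conj(R)_α·Y]`. -/
def MCf (k : Fin d → ℝ) (R Y : Coeffs d) : Coeffs d :=
  Pb k (cmul (conjC R) (dAl k Y) - cmul (dAl k R) (conjC Y))
    + Pp k (cmul R (dAl k (conjC Y)) - cmul (dAl k (conjC R)) Y)

/-- `(W,R,Y)` solves the differentiated gravity water wave system on the time interval `I`: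
`𝐖_t + b·𝐖_α + (1+𝐖)(1−conj Y)·R_α = (1+𝐖)M` and `R_t + b·R_α = i(Y − a(1−Y))`,
where `Y = 𝐖/(1+𝐖)` (equivalently `(1+𝐖)·Y = 𝐖`), so that
`(1+𝐖)/(1+conj 𝐖) = (1+𝐖)(1−conj Y)` and `i(𝐖−a)/(1+𝐖) = i(Y − a(1−Y))`. -/
structure IsWWSol (k : Fin d → ℝ) (I : Set ℝ) (W R Y : ℝ → Coeffs d) : Prop where
  holoW : ∀ t ∈ I, Holo k (W t)
  holoR : ∀ t ∈ I, Holo k (R t)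
  Ymem : ∀ t ∈ I, MemHs 0 (Y t)
  Ydef : ∀ t ∈ I, cmul (oneC + W t) (Y t) = W t
  eqW : ∀ t ∈ I, ∀ j : Freq d,
    HasDerivWithinAt (fun τ => W τ j)
      ((cmul (oneC + W t) (MCf k (R t) (Y t))
        - cmul (bC k (R t) (Y t)) (dAl k (W t))
        - cmul (cmul (oneC + W t) (oneC - conjC (Y t))) (dAl k (R t))) j) I t
  eqR : ∀ t ∈ I, ∀ j : Freq d,
    HasDerivWithinAt (fun τ => R τ j)
      ((Complex.I • (Y t - cmul (aCf k (R t)) (oneC - Y t))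
        - cmul (bC k (R t) (Y t)) (dAl k (R t))) j) I t

/-!
With `A j = (1 + ⟨j,k⟩²)^{1/2}`, the weight of `H^{0,1/2}`, the triangle inequality in `ℝ²` gives
`A j ≤ A m + A (j - m)`. A Schur test (Cauchy–Schwarz in the convolution variable, with kernel
`⟨m⟩^{-2(s-1)} (A m⁻¹ + A (j - m)⁻¹)`) then reduces the product estimate to the uniform bound
`sup_c ∑_{m ∈ ℤ^d} ⟨m⟩^{-2(s-1)} (1 + (⟨m,k⟩ - c)²)^{-1/2} < ∞`.
Since `k` has a nonzero entry `k i`, we split off the coordinate `t = m i`: the sum over `t` is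
bounded uniformly in `c` by Hölder, because `t ↦ k i * t - c` is a dilated and shifted copy of `ℤ`,
and the remaining sum over `ℤ^{d-1}` converges because `2(s-1) > d-1`. The `H^{s-1/2}` version
follows from `⟨j,k⟩² ≤ |k|² |j|²`.
-/

open scoped ENNReal NNReal

namespace ENNReal

theorem tsum_mul_le_Lp_mul_Lq {ι : Type*} [Countable ι] {p q : ℝ} (hpq : p.HolderConjugate q)
    (a b : ι → ℝ≥0∞) :
    ∑' i, a i * b i ≤ (∑' i, a i ^ p) ^ (1 / p) * (∑' i, b i ^ q) ^ (1 / q) := by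
  let _ : MeasurableSpace ι := ⊤
  simp only [← MeasureTheory.lintegral_count]
  exact ENNReal.lintegral_mul_le_Lp_mul_Lq _ hpq (measurable_of_countable _).aemeasurable
    (measurable_of_countable _).aemeasurable

theorem mul_sq_tsum_le {ι : Type*} [Countable ι] {c : ℝ≥0∞} {r f g : ι → ℝ≥0∞}
    (h : ∀ i, c * r i ^ 2 ≤ f i * g i) :
    c * (∑' i, r i) ^ 2 ≤ (∑' i, f i) * ∑' i, g i := by
  have hsq : ∀ x : ℝ≥0∞, (x ^ (1 / 2 : ℝ)) ^ (2 : ℝ) = x := fun x => by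
    rw [← rpow_mul]; norm_num
  have hroot : ∀ i, c ^ (1 / 2 : ℝ) * r i ≤ f i ^ (1 / 2 : ℝ) * g i ^ (1 / 2 : ℝ) := fun i => by
    have := rpow_le_rpow (h i) (by norm_num : (0 : ℝ) ≤ 1 / 2)
    rwa [mul_rpow_of_nonneg _ _ (by norm_num), mul_rpow_of_nonneg _ _ (by norm_num),
      ← rpow_natCast, ← rpow_mul, Nat.cast_ofNat, mul_one_div_cancel two_ne_zero, rpow_one] at this
  have hpq : (2 : ℝ).HolderConjugate 2 := .two_two
  have key := (ENNReal.tsum_mul_left.symm.trans_le (ENNReal.tsum_le_tsum hroot)).trans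
    (tsum_mul_le_Lp_mul_Lq hpq _ _)
  simp only [hsq] at key
  have := rpow_le_rpow key (by norm_num : (0 : ℝ) ≤ 2)
  rwa [mul_rpow_of_nonneg _ _ (by norm_num), mul_rpow_of_nonneg _ _ (by norm_num), hsq, hsq, hsq,
    rpow_two] at this

theorem tsum_mul_sq_tsum_conv_le {G : Type*} [AddCommGroup G] [Countable G]
    (x y w p q : G → ℝ≥0∞) (γ : G → G → ℝ≥0∞) {K : ℝ≥0∞}
    (hγ : ∀ j, ∑' m, γ j m ≤ K) (hw : ∀ j m, w j ≤ γ j m * (p m * q (j - m))) :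
    ∑' j, w j * (∑' m, x m * y (j - m)) ^ 2
      ≤ K * ((∑' m, p m * x m ^ 2) * ∑' n, q n * y n ^ 2) := by
  have hj : ∀ j, w j * (∑' m, x m * y (j - m)) ^ 2
      ≤ K * ∑' m, p m * x m ^ 2 * (q (j - m) * y (j - m) ^ 2) := fun j => by
    refine (mul_sq_tsum_le fun m => ?_).trans (mul_le_mul_left (hγ j) _)
    calc w j * (x m * y (j - m)) ^ 2
        ≤ γ j m * (p m * q (j - m)) * (x m * y (j - m)) ^ 2 := by gcongr; exact hw j m
      _ = γ j m * (p m * x m ^ 2 * (q (j - m) * y (j - m) ^ 2)) := by ring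
  calc ∑' j, w j * (∑' m, x m * y (j - m)) ^ 2
      ≤ ∑' j, K * ∑' m, p m * x m ^ 2 * (q (j - m) * y (j - m) ^ 2) := ENNReal.tsum_le_tsum hj
    _ = K * ∑' m, p m * x m ^ 2 * ∑' j, q (j - m) * y (j - m) ^ 2 := by
      rw [ENNReal.tsum_mul_left, ENNReal.tsum_comm]
      simp_rw [ENNReal.tsum_mul_left]
    _ = K * ((∑' m, p m * x m ^ 2) * ∑' n, q n * y n ^ 2) := by
      have hshift : ∀ m, ∑' j, q (j - m) * y (j - m) ^ 2 = ∑' n, q n * y n ^ 2 := fun m =>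
        (Equiv.subRight m).tsum_eq fun n => q n * y n ^ 2
      simp_rw [hshift, ENNReal.tsum_mul_right]

end ENNReal

theorem enorm_tsum_mul_le {G R : Type*} [AddCommGroup G] [NormedRing R] [NormMulClass R]
    (u v : G → R) (j : G) :
    ‖∑' m, u m * v (j - m)‖ₑ ≤ ∑' m, ‖u m‖ₑ * ‖v (j - m)‖ₑ := by
  simpa only [enorm_mul] using enorm_tsum_le_tsum_enorm (f := fun m => u m * v (j - m))

theorem summable_one_add_sq_int_rpow_neg {σ : ℝ} (hσ : 1 / 2 < σ) :
    Summable fun t : ℤ => (1 + (t : ℝ) ^ 2) ^ (-σ) := by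
  refine .of_norm_bounded_eventually (Real.summable_abs_int_rpow (b := 2 * σ) (by linarith)) ?_
  filter_upwards [Filter.eventually_cofinite_ne 0] with t ht
  have ht : (0 : ℝ) < (t : ℝ) ^ 2 := by positivity
  rw [Real.norm_of_nonneg (by positivity), neg_mul_eq_mul_neg, Real.rpow_mul (abs_nonneg _),
    Real.rpow_two, sq_abs]
  exact Real.rpow_le_rpow_of_nonpos ht (by linarith) (by linarith)

theorem tsum_ofReal_one_add_sq_int_rpow_neg_ne_top {σ : ℝ} (hσ : 1 / 2 < σ) :
    ∑' t : ℤ, ENNReal.ofReal ((1 + (t : ℝ) ^ 2) ^ (-σ)) ≠ ⊤ := by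
  rw [← ENNReal.ofReal_tsum_of_nonneg (fun _ => by positivity)
    (summable_one_add_sq_int_rpow_neg hσ)]
  exact ENNReal.ofReal_ne_top

theorem one_add_sq_le_of_abs_sub_le {κ r x : ℝ} (hκ : κ ≠ 0) (hr : |r| ≤ |κ| / 2) :
    1 + x ^ 2 ≤ (2 + 2 / κ ^ 2) * (1 + (κ * x - r) ^ 2) := by
  have hκ2 : 0 < κ ^ 2 := by positivity
  have hr2 : r ^ 2 ≤ κ ^ 2 / 4 := by
    have := mul_self_le_mul_self (abs_nonneg r) hr
    rw [← sq, ← sq, sq_abs, div_pow, sq_abs] at this; linarith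
  rw [← mul_le_mul_iff_of_pos_left hκ2, ← mul_assoc,
    show κ ^ 2 * (2 + 2 / κ ^ 2) = 2 * κ ^ 2 + 2 by field_simp]
  nlinarith [sq_nonneg (κ * x - 2 * r), sq_nonneg (κ * x - r)]

theorem tsum_one_add_sq_mul_sub_rpow_neg_le {κ : ℝ} (hκ : κ ≠ 0) {σ : ℝ} (hσ : 0 ≤ σ) (c : ℝ) :
    ∑' t : ℤ, ENNReal.ofReal ((1 + (κ * t - c) ^ 2) ^ (-σ))
      ≤ ENNReal.ofReal ((2 + 2 / κ ^ 2) ^ σ) *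
        ∑' t : ℤ, ENNReal.ofReal ((1 + (t : ℝ) ^ 2) ^ (-σ)) := by
  set t₀ := round (c / κ)
  have hr : |c - κ * t₀| ≤ |κ| / 2 := by
    have h := abs_sub_round (c / κ)
    rw [show c - κ * t₀ = κ * (c / κ - t₀) by field_simp, abs_mul]
    nlinarith [abs_nonneg κ]
  rw [← (Equiv.addRight t₀).tsum_eq, ← ENNReal.tsum_mul_left]
  refine ENNReal.tsum_le_tsum fun t => ?_
  rw [← ENNReal.ofReal_mul (by positivity)]
  refine ENNReal.ofReal_le_ofReal ?_
  have hle := one_add_sq_le_of_abs_sub_le (x := (t : ℝ)) hκ hr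
  have hM : (0 : ℝ) < 2 + 2 / κ ^ 2 := by positivity
  calc (1 + (κ * ((Equiv.addRight t₀ t : ℤ) : ℝ) - c) ^ 2) ^ (-σ)
      = (2 + 2 / κ ^ 2) ^ σ * ((2 + 2 / κ ^ 2) * (1 + (κ * t - (c - κ * t₀)) ^ 2)) ^ (-σ) := by
        rw [Real.mul_rpow hM.le (by positivity), ← mul_assoc, ← Real.rpow_add hM, add_neg_cancel,
          Real.rpow_zero, one_mul, Equiv.coe_addRight]
        push_cast
        ring_nf
    _ ≤ (2 + 2 / κ ^ 2) ^ σ * (1 + (t : ℝ) ^ 2) ^ (-σ) := by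
        gcongr ?_ * ?_
        exact Real.rpow_le_rpow_of_nonpos (by positivity) hle (by linarith)

theorem exists_tsum_one_add_sq_rpow_neg_mul_le {κ : ℝ} (hκ : κ ≠ 0) {η : ℝ} (hη : 0 < η) :
    ∃ C : ℝ≥0∞, C ≠ ⊤ ∧ ∀ c : ℝ, ∑' t : ℤ, ENNReal.ofReal ((1 + (t : ℝ) ^ 2) ^ (-η)) *
        ENNReal.ofReal ((1 + (κ * t - c) ^ 2) ^ (-(1 / 2 : ℝ))) ≤ C := by
  -- Hölder with exponents `1 + η⁻¹` and `1 + η`: both factors become summable powers.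
  have hpq : (1 + η⁻¹).HolderConjugate (1 + η) :=
    ⟨by field_simp; ring, by positivity, by positivity⟩
  have hpow : ∀ {x a b : ℝ}, 0 ≤ x → 0 ≤ b →
      ENNReal.ofReal ((1 + x) ^ (-a)) ^ b = ENNReal.ofReal ((1 + x) ^ (-(a * b))) :=
    fun hx hb => by
      rw [ENNReal.ofReal_rpow_of_nonneg (by positivity) hb, ← Real.rpow_mul (by positivity),
        neg_mul]
  set B := ENNReal.ofReal ((2 + 2 / κ ^ 2) ^ ((1 + η) / 2)) *
    ∑' t : ℤ, ENNReal.ofReal ((1 + (t : ℝ) ^ 2) ^ (-((1 + η) / 2)))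
  refine ⟨(∑' t : ℤ, ENNReal.ofReal ((1 + (t : ℝ) ^ 2) ^ (-(η * (1 + η⁻¹))))) ^ (1 / (1 + η⁻¹)) *
    B ^ (1 / (1 + η)), ?_, fun c => ?_⟩
  · refine ENNReal.mul_ne_top (ENNReal.rpow_ne_top_of_nonneg (by positivity) ?_)
      (ENNReal.rpow_ne_top_of_nonneg (by positivity) (ENNReal.mul_ne_top ENNReal.ofReal_ne_top ?_))
    · exact tsum_ofReal_one_add_sq_int_rpow_neg_ne_top (by field_simp; linarith)
    · exact tsum_ofReal_one_add_sq_int_rpow_neg_ne_top (by linarith)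
  refine (ENNReal.tsum_mul_le_Lp_mul_Lq hpq _ _).trans ?_
  simp only [hpow (sq_nonneg _) (by positivity : (0 : ℝ) ≤ 1 + η⁻¹),
    hpow (sq_nonneg _) (by positivity : (0 : ℝ) ≤ 1 + η)]
  gcongr
  convert tsum_one_add_sq_mul_sub_rpow_neg_le hκ (by positivity : (0 : ℝ) ≤ (1 + η) / 2) c
    using 4
  ring_nf

theorem jb_sq (j : Freq d) : jb j ^ 2 = 1 + ∑ i, (j i : ℝ) ^ 2 :=
  Real.sq_sqrt (by positivity)

theorem one_le_jb (j : Freq d) : 1 ≤ jb j :=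
  Real.one_le_sqrt.2 (le_add_of_nonneg_right (by positivity))

theorem jb_pos (j : Freq d) : 0 < jb j :=
  one_pos.trans_le (one_le_jb j)

theorem jb_insertNth_sq {e : ℕ} (i : Fin (e + 1)) (t : ℤ) (m : Freq e) :
    jb (i.insertNth t m) ^ 2 = (t : ℝ) ^ 2 + jb m ^ 2 := by
  simp only [jb_sq, Fin.sum_univ_succAbove _ i, Fin.insertNth_apply_same,
    Fin.insertNth_apply_succAbove]
  ring

theorem jb_insertNth_rpow_neg_le {e : ℕ} (i : Fin (e + 1)) (t : ℤ) (m : Freq e) {a b : ℝ}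
    (ha : 0 ≤ a) (hb : 0 ≤ b) :
    jb (i.insertNth t m) ^ (-(a + b)) ≤ jb m ^ (-a) * (1 + (t : ℝ) ^ 2) ^ (-(b / 2)) := by
  have hsq := jb_insertNth_sq i t m
  have hJ := jb_pos (i.insertNth t m)
  have h1 : jb m ≤ jb (i.insertNth t m) := by
    nlinarith [jb_pos m, sq_nonneg (t : ℝ)]
  have h2 : 1 + (t : ℝ) ^ 2 ≤ jb (i.insertNth t m) ^ 2 := by
    nlinarith [one_le_jb m]
  rw [neg_add, Real.rpow_add hJ, show -b = 2 * -(b / 2) by ring, Real.rpow_mul hJ.le,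
    Real.rpow_two]
  exact mul_le_mul (Real.rpow_le_rpow_of_nonpos (jb_pos m) h1 (by linarith))
    (Real.rpow_le_rpow_of_nonpos (by positivity) h2 (by linarith)) (by positivity)
    (Real.rpow_nonneg (jb_pos m).le _)

theorem dotk_insertNth {e : ℕ} (k : Fin (e + 1) → ℝ) (i : Fin (e + 1)) (t : ℤ) (m : Freq e) :
    dotk k (i.insertNth t m) = k i * t + dotk (fun l => k (i.succAbove l)) m := by
  simp only [dotk, Fin.sum_univ_succAbove _ i, Fin.insertNth_apply_same,
    Fin.insertNth_apply_succAbove]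
  ring

theorem tsum_freq_succ_eq_insertNth {e : ℕ} (i : Fin (e + 1)) (F : Freq (e + 1) → ℝ≥0∞) :
    ∑' m, F m = ∑' (t : ℤ) (m : Freq e), F (i.insertNth t m) := by
  rw [← (Fin.insertNthEquiv (fun _ => ℤ) i).tsum_eq, ENNReal.tsum_prod']
  rfl

theorem tsum_jb_rpow_neg_ne_top : ∀ {e : ℕ} {q : ℝ}, (e : ℝ) < q →
    ∑' m : Freq e, ENNReal.ofReal (jb m ^ (-q)) ≠ ⊤
  | 0, _, _ => by simp
  | e + 1, q, hq => by
    push_cast at hq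
    have ha : (e : ℝ) < (q + e - 1) / 2 := by linarith
    have hb : 1 / 2 < (q - e + 1) / 4 := by linarith
    refine ne_top_of_le_ne_top (ENNReal.mul_ne_top
      (tsum_ofReal_one_add_sq_int_rpow_neg_ne_top hb) (tsum_jb_rpow_neg_ne_top ha)) ?_
    rw [tsum_freq_succ_eq_insertNth 0, ← ENNReal.tsum_mul_right]
    refine ENNReal.tsum_le_tsum fun t => ?_
    rw [← ENNReal.tsum_mul_left]
    refine ENNReal.tsum_le_tsum fun m => ?_
    rw [← ENNReal.ofReal_mul (by positivity), mul_comm]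
    refine ENNReal.ofReal_le_ofReal ?_
    convert jb_insertNth_rpow_neg_le 0 t m (a := (q + e - 1) / 2) (b := (q - e + 1) / 2)
      (by linarith) (by linarith) using 3 <;> ring

theorem exists_tsum_jb_rpow_neg_mul_le {k : Fin d → ℝ} {i : Fin d} (hki : k i ≠ 0)
    {p : ℝ} (hp : (d : ℝ) - 1 < p) :
    ∃ C : ℝ≥0∞, C ≠ ⊤ ∧ ∀ c : ℝ, ∑' m : Freq d, ENNReal.ofReal (jb m ^ (-p)) *
        ENNReal.ofReal ((1 + (dotk k m - c) ^ 2) ^ (-(1 / 2 : ℝ))) ≤ C := by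
  obtain ⟨e, rfl⟩ := Nat.exists_eq_add_one.2 i.pos
  push_cast at hp
  obtain ⟨C₁, hC₁, hbound⟩ :=
    exists_tsum_one_add_sq_rpow_neg_mul_le hki (η := (p - e) / 4) (by linarith)
  refine ⟨(∑' m : Freq e, ENNReal.ofReal (jb m ^ (-((p + e) / 2)))) * C₁,
    ENNReal.mul_ne_top (tsum_jb_rpow_neg_ne_top (by linarith)) hC₁, fun c => ?_⟩
  set k' : Fin e → ℝ := fun l => k (i.succAbove l)
  have hsplit : ∀ (t : ℤ) (m : Freq e),
      ENNReal.ofReal (jb (i.insertNth t m) ^ (-p)) *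
        ENNReal.ofReal ((1 + (dotk k (i.insertNth t m) - c) ^ 2) ^ (-(1 / 2 : ℝ)))
      ≤ ENNReal.ofReal (jb m ^ (-((p + e) / 2))) *
        (ENNReal.ofReal ((1 + (t : ℝ) ^ 2) ^ (-((p - e) / 4))) *
          ENNReal.ofReal ((1 + (k i * t - (c - dotk k' m)) ^ 2) ^ (-(1 / 2 : ℝ)))) := by
    intro t m
    rw [dotk_insertNth, show k i * t + dotk k' m - c = k i * t - (c - dotk k' m) by ring,
      ← mul_assoc, ← ENNReal.ofReal_mul (Real.rpow_nonneg (jb_pos m).le _)]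
    refine mul_le_mul_left (ENNReal.ofReal_le_ofReal ?_) _
    convert jb_insertNth_rpow_neg_le i t m (a := (p + e) / 2) (b := (p - e) / 2)
      (by linarith) (by linarith) using 3 <;> ring
  calc ∑' m : Freq (e + 1), ENNReal.ofReal (jb m ^ (-p)) *
        ENNReal.ofReal ((1 + (dotk k m - c) ^ 2) ^ (-(1 / 2 : ℝ)))
      ≤ ∑' (t : ℤ) (m : Freq e), ENNReal.ofReal (jb m ^ (-((p + e) / 2))) *
        (ENNReal.ofReal ((1 + (t : ℝ) ^ 2) ^ (-((p - e) / 4))) *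
          ENNReal.ofReal ((1 + (k i * t - (c - dotk k' m)) ^ 2) ^ (-(1 / 2 : ℝ)))) := by
        rw [tsum_freq_succ_eq_insertNth i]
        exact ENNReal.tsum_le_tsum fun t => ENNReal.tsum_le_tsum fun m => hsplit t m
    _ ≤ ∑' m : Freq e, ENNReal.ofReal (jb m ^ (-((p + e) / 2))) * C₁ := by
        rw [ENNReal.tsum_comm]
        refine ENNReal.tsum_le_tsum fun m => ?_
        rw [ENNReal.tsum_mul_left]
        exact mul_le_mul_right (hbound _) _
    _ = (∑' m : Freq e, ENNReal.ofReal (jb m ^ (-((p + e) / 2)))) * C₁ := ENNReal.tsum_mul_right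

theorem Indep.ne_zero {k : Fin d → ℝ} (hk : Indep k) (i : Fin d) : k i ≠ 0 := by
  intro hki
  have hdot : dotk k (Pi.single i 1) = 0 := by
    simp [dotk, Pi.single_apply, hki]
  simpa using congrFun (hk _ hdot) i

theorem wt_nonneg (k : Fin d → ℝ) (s θ : ℝ) (j : Freq d) : 0 ≤ wt k s θ j :=
  mul_nonneg (Real.rpow_nonneg (jb_pos j).le _) (by positivity)

theorem dotk_sub (k : Fin d → ℝ) (x y : Freq d) : dotk k (x - y) = dotk k x - dotk k y := by
  simp only [dotk, Pi.sub_apply, Int.cast_sub, sub_mul, Finset.sum_sub_distrib]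

theorem one_add_sq_add_rpow_half_le (a b : ℝ) :
    (1 + (a + b) ^ 2) ^ (1 / 2 : ℝ) ≤ (1 + a ^ 2) ^ (1 / 2 : ℝ) + (1 + b ^ 2) ^ (1 / 2 : ℝ) := by
  simp only [← Real.sqrt_eq_rpow]
  have ha := Real.sq_sqrt (by positivity : (0 : ℝ) ≤ 1 + a ^ 2)
  have hb := Real.sq_sqrt (by positivity : (0 : ℝ) ≤ 1 + b ^ 2)
  have hab : |a| * |b| ≤ √(1 + a ^ 2) * √(1 + b ^ 2) :=
    mul_le_mul (Real.abs_le_sqrt (by linarith)) (Real.abs_le_sqrt (by linarith)) (abs_nonneg b)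
      (Real.sqrt_nonneg _)
  refine Real.sqrt_le_iff.2 ⟨by positivity, ?_⟩
  nlinarith [abs_mul_abs_self a, abs_mul_abs_self b, le_abs_self (a * b), abs_mul a b]

def schurKernel (k : Fin d → ℝ) (σ : ℝ) (j m : Freq d) : ℝ :=
  jb m ^ (-(2 * σ)) * ((1 + dotk k m ^ 2) ^ (-(1 / 2 : ℝ)) +
    (1 + (dotk k m - dotk k j) ^ 2) ^ (-(1 / 2 : ℝ)))

theorem schurKernel_nonneg (k : Fin d → ℝ) (σ : ℝ) (j m : Freq d) : 0 ≤ schurKernel k σ j m :=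
  mul_nonneg (Real.rpow_nonneg (jb_pos m).le _) (by positivity)

theorem wt_le_schurKernel_mul (k : Fin d → ℝ) (σ : ℝ) (j m : Freq d) :
    wt k 0 (1 / 2) j ≤ schurKernel k σ j m * (wt k σ (1 / 2) m * wt k 0 (1 / 2) (j - m)) := by
  set A : Freq d → ℝ := fun j => (1 + dotk k j ^ 2) ^ (1 / 2 : ℝ)
  have hA : ∀ j, 0 < A j := fun j => by positivity
  have hJ := Real.rpow_pos_of_pos (jb_pos m) (2 * σ)
  have h1 : (1 + dotk k m ^ 2) ^ (-(1 / 2 : ℝ)) = (A m)⁻¹ := Real.rpow_neg (by positivity) _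
  have h2 : (1 + (dotk k m - dotk k j) ^ 2) ^ (-(1 / 2 : ℝ)) = (A (j - m))⁻¹ := by
    rw [Real.rpow_neg (by positivity), ← neg_sub, neg_sq, ← dotk_sub]
  have hsub : A j ≤ A m + A (j - m) := by
    simpa only [A, dotk_sub, add_sub_cancel] using
      one_add_sq_add_rpow_half_le (dotk k m) (dotk k j - dotk k m)
  simp only [schurKernel, h1, h2, wt, Real.rpow_neg (jb_pos m).le, mul_zero, Real.rpow_zero,
    one_mul]
  change A j ≤ (jb m ^ (2 * σ))⁻¹ * ((A m)⁻¹ + (A (j - m))⁻¹) *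
    (jb m ^ (2 * σ) * A m * A (j - m))
  convert hsub using 1
  field_simp [(hA m).ne', (hA (j - m)).ne']
  ring

theorem tsum_schurKernel_le {k : Fin d → ℝ} {σ : ℝ} {C₀ : ℝ≥0∞}
    (hkey : ∀ c : ℝ, ∑' m : Freq d, ENNReal.ofReal (jb m ^ (-(2 * σ))) *
      ENNReal.ofReal ((1 + (dotk k m - c) ^ 2) ^ (-(1 / 2 : ℝ))) ≤ C₀) (j : Freq d) :
    ∑' m, ENNReal.ofReal (schurKernel k σ j m) ≤ C₀ + C₀ := by
  have hJ : ∀ m : Freq d, 0 ≤ jb m ^ (-(2 * σ)) := fun m => Real.rpow_nonneg (jb_pos m).le _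
  have hsplit : ∀ m, ENNReal.ofReal (schurKernel k σ j m)
      = ENNReal.ofReal (jb m ^ (-(2 * σ))) *
          ENNReal.ofReal ((1 + (dotk k m - 0) ^ 2) ^ (-(1 / 2 : ℝ))) +
        ENNReal.ofReal (jb m ^ (-(2 * σ))) *
          ENNReal.ofReal ((1 + (dotk k m - dotk k j) ^ 2) ^ (-(1 / 2 : ℝ))) := fun m => by
    rw [schurKernel, sub_zero, mul_add, ENNReal.ofReal_add (mul_nonneg (hJ m) (by positivity))
      (mul_nonneg (hJ m) (by positivity)), ENNReal.ofReal_mul (hJ m), ENNReal.ofReal_mul (hJ m)]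
  rw [tsum_congr hsplit, ENNReal.tsum_add]
  exact add_le_add (hkey 0) (hkey _)

theorem tsum_wt_mul_enorm_cmul_sq_le {k : Fin d → ℝ} {σ : ℝ} {C₀ : ℝ≥0∞}
    (hkey : ∀ c : ℝ, ∑' m : Freq d, ENNReal.ofReal (jb m ^ (-(2 * σ))) *
      ENNReal.ofReal ((1 + (dotk k m - c) ^ 2) ^ (-(1 / 2 : ℝ))) ≤ C₀) (f u : Coeffs d) :
    ∑' j, ENNReal.ofReal (wt k 0 (1 / 2) j) * ‖cmul f u j‖ₑ ^ 2 ≤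
      (C₀ + C₀) * ((∑' m, ENNReal.ofReal (wt k σ (1 / 2) m) * ‖f m‖ₑ ^ 2) *
        ∑' n, ENNReal.ofReal (wt k 0 (1 / 2) n) * ‖u n‖ₑ ^ 2) := by
  refine (ENNReal.tsum_le_tsum fun j => mul_le_mul_right
    (pow_le_pow_left' (enorm_tsum_mul_le f u j) 2) _).trans ?_
  refine ENNReal.tsum_mul_sq_tsum_conv_le _ _ _ _ _
    (fun j m => ENNReal.ofReal (schurKernel k σ j m)) (tsum_schurKernel_le hkey) fun j m => ?_
  rw [← ENNReal.ofReal_mul (wt_nonneg _ _ _ _), ← ENNReal.ofReal_mul (schurKernel_nonneg _ _ _ _)]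
  exact ENNReal.ofReal_le_ofReal (wt_le_schurKernel_mul k σ j m)

theorem ofReal_tsum_mul_norm_sq {ι E : Type*} [SeminormedAddGroup E] {w : ι → ℝ}
    (hw : ∀ i, 0 ≤ w i) {u : ι → E}
    (hu : Summable fun i => w i * ‖u i‖ ^ 2) :
    ENNReal.ofReal (∑' i, w i * ‖u i‖ ^ 2) = ∑' i, ENNReal.ofReal (w i) * ‖u i‖ₑ ^ 2 := by
  rw [ENNReal.ofReal_tsum_of_nonneg (fun i => mul_nonneg (hw i) (sq_nonneg _)) hu]
  exact tsum_congr fun i => by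
    rw [ENNReal.ofReal_mul (hw i), ENNReal.ofReal_pow (norm_nonneg _), ofReal_norm]

theorem summable_and_tsum_le_of_tsum_ofReal_le {ι E : Type*} [SeminormedAddGroup E] {w : ι → ℝ}
    (hw : ∀ i, 0 ≤ w i) {u : ι → E} {B : ℝ} (hB : 0 ≤ B)
    (h : ∑' i, ENNReal.ofReal (w i) * ‖u i‖ₑ ^ 2 ≤ ENNReal.ofReal B) :
    (Summable fun i => w i * ‖u i‖ ^ 2) ∧ ∑' i, w i * ‖u i‖ ^ 2 ≤ B := by
  have hnn : ∀ i, 0 ≤ w i * ‖u i‖ ^ 2 := fun i => mul_nonneg (hw i) (sq_nonneg _)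
  simp_rw [← ofReal_norm, ← ENNReal.ofReal_pow (norm_nonneg _),
    ← ENNReal.ofReal_mul (hw _)] at h
  have hsum : Summable fun i => w i * ‖u i‖ ^ 2 := by
    simpa only [ENNReal.toReal_ofReal (hnn _)] using
      ENNReal.summable_toReal (ne_top_of_le_ne_top ENNReal.ofReal_ne_top h)
  refine ⟨hsum, ?_⟩
  rwa [← ENNReal.ofReal_tsum_of_nonneg hnn hsum, ENNReal.ofReal_le_ofReal_iff hB] at h

theorem exists_sobNorm_cmul_le {k : Fin d → ℝ} {σ : ℝ} {C₀ : ℝ≥0∞} (hC₀ : C₀ ≠ ⊤)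
    (hkey : ∀ c : ℝ, ∑' m : Freq d, ENNReal.ofReal (jb m ^ (-(2 * σ))) *
      ENNReal.ofReal ((1 + (dotk k m - c) ^ 2) ^ (-(1 / 2 : ℝ))) ≤ C₀) :
    ∃ C : ℝ, 0 < C ∧ ∀ f u : Coeffs d, MemSob k σ (1 / 2) f → MemSob k 0 (1 / 2) u →
      MemSob k 0 (1 / 2) (cmul f u) ∧
        sobNorm k 0 (1 / 2) (cmul f u) ≤ C * sobNorm k σ (1 / 2) f * sobNorm k 0 (1 / 2) u := by
  set K := (C₀ + C₀).toReal + 1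
  refine ⟨√K, by positivity, fun f u hf hu => ?_⟩
  set Sf := ∑' m, wt k σ (1 / 2) m * ‖f m‖ ^ 2
  set Su := ∑' n, wt k 0 (1 / 2) n * ‖u n‖ ^ 2
  have hSf : 0 ≤ Sf := tsum_nonneg fun m => mul_nonneg (wt_nonneg _ _ _ _) (sq_nonneg _)
  have hSu : 0 ≤ Su := tsum_nonneg fun n => mul_nonneg (wt_nonneg _ _ _ _) (sq_nonneg _)
  have hbound : ∑' j, ENNReal.ofReal (wt k 0 (1 / 2) j) * ‖cmul f u j‖ₑ ^ 2
      ≤ ENNReal.ofReal (K * (Sf * Su)) :=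
    calc ∑' j, ENNReal.ofReal (wt k 0 (1 / 2) j) * ‖cmul f u j‖ₑ ^ 2
        ≤ (C₀ + C₀) * (ENNReal.ofReal Sf * ENNReal.ofReal Su) := by
          rw [ofReal_tsum_mul_norm_sq (wt_nonneg _ _ _) hf,
            ofReal_tsum_mul_norm_sq (wt_nonneg _ _ _) hu]
          exact tsum_wt_mul_enorm_cmul_sq_le hkey f u
      _ = ENNReal.ofReal ((C₀ + C₀).toReal * (Sf * Su)) := by
          rw [ENNReal.ofReal_mul ENNReal.toReal_nonneg, ENNReal.ofReal_toReal
            (ENNReal.add_ne_top.2 ⟨hC₀, hC₀⟩), ENNReal.ofReal_mul hSf]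
      _ ≤ ENNReal.ofReal (K * (Sf * Su)) := by
          gcongr
          exact le_add_of_nonneg_right zero_le_one
  obtain ⟨hmem, hle⟩ :=
    summable_and_tsum_le_of_tsum_ofReal_le (wt_nonneg _ _ _) (by positivity) hbound
  refine ⟨hmem, ?_⟩
  calc sobNorm k 0 (1 / 2) (cmul f u) ≤ √(K * (Sf * Su)) := Real.sqrt_le_sqrt hle
    _ = √K * sobNorm k σ (1 / 2) f * sobNorm k 0 (1 / 2) u := by
        rw [Real.sqrt_mul (by positivity), Real.sqrt_mul hSf, mul_assoc]
        rfl

theorem one_add_dotk_sq_le (k : Fin d → ℝ) (m : Freq d) :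
    1 + dotk k m ^ 2 ≤ (1 + ∑ i, k i ^ 2) * jb m ^ 2 := by
  have hcs : dotk k m ^ 2 ≤ (∑ i, (m i : ℝ) ^ 2) * ∑ i, k i ^ 2 :=
    Finset.sum_mul_sq_le_sq_mul_sq _ _ _
  have hm : 0 ≤ ∑ i, (m i : ℝ) ^ 2 := by positivity
  have hk : 0 ≤ ∑ i, k i ^ 2 := by positivity
  rw [jb_sq]
  nlinarith

theorem wt_half_le (k : Fin d → ℝ) (σ : ℝ) (m : Freq d) :
    wt k σ (1 / 2) m ≤ √(1 + ∑ i, k i ^ 2) * jb m ^ (2 * (σ + 1 / 2)) := by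
  have hJ := jb_pos m
  have hdot : (1 + dotk k m ^ 2) ^ (1 / 2 : ℝ) ≤ √(1 + ∑ i, k i ^ 2) * jb m := by
    rw [← Real.sqrt_eq_rpow, ← Real.sqrt_sq hJ.le, ← Real.sqrt_mul (by positivity)]
    exact Real.sqrt_le_sqrt (one_add_dotk_sq_le k m)
  rw [wt, mul_add, mul_one_div_cancel two_ne_zero, Real.rpow_add hJ, Real.rpow_one]
  calc jb m ^ (2 * σ) * (1 + dotk k m ^ 2) ^ (1 / 2 : ℝ)
      ≤ jb m ^ (2 * σ) * (√(1 + ∑ i, k i ^ 2) * jb m) := by gcongr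
    _ = √(1 + ∑ i, k i ^ 2) * (jb m ^ (2 * σ) * jb m) := by ring

theorem memSob_and_sobNorm_le_of_memHs (k : Fin d → ℝ) {σ : ℝ} {f : Coeffs d}
    (hf : MemHs (σ + 1 / 2) f) :
    MemSob k σ (1 / 2) f ∧
      sobNorm k σ (1 / 2) f ≤ √(√(1 + ∑ i, k i ^ 2)) * HsNorm (σ + 1 / 2) f := by
  have hle : ∀ m, wt k σ (1 / 2) m * ‖f m‖ ^ 2
      ≤ √(1 + ∑ i, k i ^ 2) * (jb m ^ (2 * (σ + 1 / 2)) * ‖f m‖ ^ 2) := fun m => by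
    rw [← mul_assoc]
    gcongr
    exact wt_half_le k σ m
  have hsum : MemSob k σ (1 / 2) f :=
    .of_nonneg_of_le (fun m => mul_nonneg (wt_nonneg _ _ _ _) (sq_nonneg _)) hle (hf.mul_left _)
  refine ⟨hsum, ?_⟩
  calc sobNorm k σ (1 / 2) f
      ≤ √(√(1 + ∑ i, k i ^ 2) * ∑' m, jb m ^ (2 * (σ + 1 / 2)) * ‖f m‖ ^ 2) := by
        rw [← tsum_mul_left]
        exact Real.sqrt_le_sqrt (hsum.tsum_le_tsum hle (hf.mul_left _))
    _ = √(√(1 + ∑ i, k i ^ 2)) * HsNorm (σ + 1 / 2) f := Real.sqrt_mul (Real.sqrt_nonneg _) _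

/-- **Lemma 5.3, bounds (prod1) and (prod3) (Product estimate, anisotropic version).**
Let `s > (d+1)/2`. There is a constant `C = C(d,s,k)` such that for every
`f ∈ H^{s-1,1/2}(𝕋^d)` and every `u ∈ H^{0,1/2}(𝕋^d)`, the product `fu` lies in
`H^{0,1/2}(𝕋^d)` and `‖fu‖_{H^{0,1/2}} ≤ C ‖f‖_{H^{s-1,1/2}} ‖u‖_{H^{0,1/2}}`.
In particular `‖fu‖_{H^{0,1/2}} ≤ C' ‖f‖_{H^{s-1/2}} ‖u‖_{H^{0,1/2}}` for all
`f ∈ H^{s-1/2}(𝕋^d)`. -/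
theorem product_aniso
    (d : ℕ) (hd : 1 ≤ d) (k : Fin d → ℝ) (hk : Indep k)
    (s : ℝ) (hs : ((d : ℝ) + 1) / 2 < s) :
    (∃ C : ℝ, 0 < C ∧
      ∀ f u : Coeffs d, MemSob k (s - 1) (1/2) f → MemSob k 0 (1/2) u →
        MemSob k 0 (1/2) (cmul f u) ∧
        sobNorm k 0 (1/2) (cmul f u)
          ≤ C * sobNorm k (s - 1) (1/2) f * sobNorm k 0 (1/2) u) ∧
    (∃ C' : ℝ, 0 < C' ∧
      ∀ f u : Coeffs d, MemHs (s - 1/2) f → MemSob k 0 (1/2) u →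
        MemSob k 0 (1/2) (cmul f u) ∧
        sobNorm k 0 (1/2) (cmul f u)
          ≤ C' * HsNorm (s - 1/2) f * sobNorm k 0 (1/2) u) := by
  obtain ⟨C₀, hC₀, hkey⟩ :=
    exists_tsum_jb_rpow_neg_mul_le (hk.ne_zero ⟨0, hd⟩) (p := 2 * (s - 1)) (by linarith)
  obtain ⟨C, hC, hprod⟩ := exists_sobNorm_cmul_le hC₀ hkey
  refine ⟨⟨C, hC, hprod⟩, C * √(√(1 + ∑ i, k i ^ 2)), by positivity, fun f u hf hu => ?_⟩
  have hs' : s - 1 + 1 / 2 = s - 1 / 2 := by ring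
  obtain ⟨hf', hnorm⟩ := memSob_and_sobNorm_le_of_memHs k (σ := s - 1) (hs' ▸ hf)
  obtain ⟨hmem, hle⟩ := hprod f u hf' hu
  refine ⟨hmem, hle.trans ?_⟩
  rw [hs'] at hnorm
  calc C * sobNorm k (s - 1) (1 / 2) f * sobNorm k 0 (1 / 2) u
      ≤ C * (√(√(1 + ∑ i, k i ^ 2)) * HsNorm (s - 1 / 2) f) * sobNorm k 0 (1 / 2) u := by
        gcongr
        exact Real.sqrt_nonneg _
    _ = C * √(√(1 + ∑ i, k i ^ 2)) * HsNorm (s - 1 / 2) f * sobNorm k 0 (1 / 2) u := by ring
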